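/- Assume the weight matrix ω is symmetric. Then the energy E is coercive (E(x) → ∞ as ‖x‖ → ∞) and attains a global minimum on ℝ^N; consequently, the autonomous Hopfield network possesses at least one equilibrium point x* with u(x*) = 0. -/

import Mathlib

open Real Filter

noncomputable def F (lam s : ℝ) : ℝ := (2 / Real.pi) * Real.arctan (lam * Real.pi * s / 2)

noncomputable def G (lam s : ℝ) : ℝ := (2 / (lam * Real.pi ^ 2)) * Real.log (1 + (lam * Real.pi * s / 2) ^ 2)

noncomputable def u (N : ℕ) (lam g : ℝ) (ω : Fin N → Fin N → ℝ) (x : Fin N → ℝ) (i : Fin N) : ℝ :=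
  -x i + g * ∑ j, F lam (ω i j) * F lam (x j)

noncomputable def E (N : ℕ) (lam g : ℝ) (ω : Fin N → Fin N → ℝ) (x : Fin N → ℝ) : ℝ :=
  ∑ i, G lam (x i) - (g / 2) * ∑ i, ∑ j, F lam (ω i j) * F lam (x i) * F lam (x j)

/-! Since |F| ≤ 1, the interaction term of `E` is bounded, so `E` differs by a bounded amount from
`∑ i, G (x i)`, which is coercive because `G` grows logarithmically in both directions. A continuous
coercive function has a global minimizer. For symmetric `ω` the partial derivatives of the energy are
`∂E/∂x_i = -F'(x_i) u_i(x)` with `F' > 0`, so the vanishing gradient at the minimizer makes it an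
equilibrium. -/

open Function

theorem tendsto_sum_cocompact_pi {ι : Type*} [Fintype ι] {X : ι → Type*}
    [∀ i, TopologicalSpace (X i)] {f : ∀ i, X i → ℝ} (hf_nonneg : ∀ i x, 0 ≤ f i x)
    (hf : ∀ i, Tendsto (f i) (cocompact (X i)) atTop) :
    Tendsto (fun x : ∀ i, X i => ∑ i, f i (x i)) (cocompact (∀ i, X i)) atTop := by
  rw [← coprodᵢ_cocompact, Filter.coprodᵢ, tendsto_iSup]
  intro i
  refine tendsto_atTop_mono (fun x => ?_) ((hf i).comp tendsto_comap)
  exact Finset.single_le_sum (fun j _ => hf_nonneg j (x j)) (Finset.mem_univ i)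

theorem hasDerivAt_sum_apply_update {ι : Type*} [Fintype ι] [DecidableEq ι] {h : ℝ → ℝ}
    {h' : ℝ} (x : ι → ℝ) (i : ι) (hh : HasDerivAt h h' (x i)) :
    HasDerivAt (fun s => ∑ k, h (update x i s k)) h' (x i) := by
  have hsplit : (fun s => ∑ k, h (update x i s k)) =
      fun s => h s + ∑ k ∈ Finset.univ \ {i}, h (x k) := by
    funext s
    rw [← Finset.sum_update_of_mem (Finset.mem_univ i)]
    exact Finset.sum_congr rfl fun k _ => apply_update (fun _ => h) x i s k
  rw [hsplit]
  exact hh.add_const _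

theorem hasDerivAt_quadratic_update {ι : Type*} [Fintype ι] [DecidableEq ι]
    {A : ι → ι → ℝ} (hA : ∀ k j, A k j = A j k) (v : ι → ℝ) (i : ι) :
    HasDerivAt (fun s => ∑ k, ∑ j, A k j * update v i s k * update v i s j)
      (2 * ∑ j, A i j * v j) (v i) := by
  have hcoord : ∀ k,
      HasDerivAt (fun s => update v i s k) (Pi.single (M := fun _ => ℝ) i 1 k) (v i) :=
    fun k => hasDerivAt_pi.mp (hasDerivAt_update v i (v i)) k
  have hterm := HasDerivAt.fun_sum fun k (_ : k ∈ Finset.univ) =>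
    HasDerivAt.fun_sum fun j (_ : j ∈ Finset.univ) =>
      ((hcoord k).const_mul (A k j)).fun_mul (hcoord j)
  refine hterm.congr_deriv ?_
  rw [update_eq_self]
  simp only [Pi.single_apply, Finset.sum_add_distrib]
  simp [hA _ i]
  ring

noncomputable def F' (lam s : ℝ) : ℝ := lam / (1 + (lam * π * s / 2) ^ 2)

section Activation

variable {lam : ℝ}

theorem hasDerivAt_F (lam s : ℝ) : HasDerivAt (F lam) (F' lam s) s := by
  have hlin : HasDerivAt (fun t => lam * π * t / 2) (lam * π / 2) s := by
    simpa using ((hasDerivAt_id s).const_mul (lam * π)).div_const 2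
  refine (((hasDerivAt_arctan _).comp s hlin).const_mul (2 / π)).congr_deriv ?_
  rw [F']
  field_simp

theorem hasDerivAt_G (hlam : lam ≠ 0) (s : ℝ) : HasDerivAt (G lam) (s * F' lam s) s := by
  have hlin : HasDerivAt (fun t => lam * π * t / 2) (lam * π / 2) s := by
    simpa using ((hasDerivAt_id s).const_mul (lam * π)).div_const 2
  have hpos : (0 : ℝ) < 1 + (lam * π * s / 2) ^ 2 := by positivity
  have hlog := ((hlin.fun_pow 2).const_add 1).log hpos.ne'
  refine (hlog.const_mul (2 / (lam * π ^ 2))).congr_deriv ?_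
  rw [F']
  field_simp
  ring

theorem F'_pos (hlam : 0 < lam) (s : ℝ) : 0 < F' lam s := by
  unfold F'
  positivity

theorem abs_F_le_one (lam s : ℝ) : |F lam s| ≤ 1 := by
  have hbound : |arctan (lam * π * s / 2)| ≤ π / 2 :=
    abs_le.mpr ⟨(neg_pi_div_two_lt_arctan _).le, (arctan_lt_pi_div_two _).le⟩
  rw [F, abs_mul, abs_of_pos (by positivity : (0 : ℝ) < 2 / π)]
  calc 2 / π * |arctan (lam * π * s / 2)| ≤ 2 / π * (π / 2) := by gcongr
    _ = 1 := by field_simp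

theorem G_nonneg (hlam : 0 < lam) (s : ℝ) : 0 ≤ G lam s := by
  have : 0 ≤ log (1 + (lam * π * s / 2) ^ 2) := log_nonneg (by nlinarith)
  unfold G
  positivity

theorem continuous_F (lam : ℝ) : Continuous (F lam) :=
  continuous_const.mul (continuous_arctan.comp (by fun_prop))

theorem continuous_G (lam : ℝ) : Continuous (G lam) :=
  continuous_const.mul ((by fun_prop : Continuous fun s => 1 + (lam * π * s / 2) ^ 2).log
    fun s => by positivity)

theorem G_norm (lam s : ℝ) : G lam ‖s‖ = G lam s := by
  simp only [G, norm_eq_abs, mul_div_assoc, mul_pow, div_pow, sq_abs]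

theorem tendsto_G_cocompact (hlam : 0 < lam) : Tendsto (G lam) (cocompact ℝ) atTop := by
  have hsq : Tendsto (fun r : ℝ => 1 + (lam * π * r / 2) ^ 2) atTop atTop :=
    tendsto_atTop_add_const_left _ 1 <| (tendsto_pow_atTop two_ne_zero).comp <|
      (tendsto_id.const_mul_atTop (by positivity)).atTop_div_const two_pos
  have hG : Tendsto (G lam) atTop atTop :=
    (tendsto_log_atTop.comp hsq).const_mul_atTop (by positivity)
  simpa only [Function.comp_def, G_norm] using hG.comp (tendsto_norm_cocompact_atTop (E := ℝ))

end Activation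

section Energy

variable {N : ℕ} {lam : ℝ}

theorem sum_G_sub_le_E (g : ℝ) (ω : Fin N → Fin N → ℝ) (x : Fin N → ℝ) :
    ∑ i, G lam (x i) - |g| / 2 * N ^ 2 ≤ E N lam g ω x := by
  set S := ∑ i, ∑ j, F lam (ω i j) * F lam (x i) * F lam (x j)
  have hterm : ∀ i j, |F lam (ω i j) * F lam (x i) * F lam (x j)| ≤ 1 := fun i j => by
    simp only [abs_mul]
    exact mul_le_one₀ (mul_le_one₀ (abs_F_le_one _ _) (abs_nonneg _) (abs_F_le_one _ _))
      (abs_nonneg _) (abs_F_le_one _ _)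
  have hS : |S| ≤ N ^ 2 := calc
    |S| ≤ ∑ i, ∑ j, |F lam (ω i j) * F lam (x i) * F lam (x j)| :=
      (Finset.abs_sum_le_sum_abs _ _).trans
        (Finset.sum_le_sum fun i _ => Finset.abs_sum_le_sum_abs _ _)
    _ ≤ ∑ _i : Fin N, ∑ _j : Fin N, (1 : ℝ) := by gcongr with i _ j _; exact hterm i j
    _ = N ^ 2 := by simp [sq]
  have hinteraction : g / 2 * S ≤ |g| / 2 * N ^ 2 := calc
    g / 2 * S ≤ |g / 2 * S| := le_abs_self _
    _ = |g| / 2 * |S| := by rw [abs_mul, abs_div, abs_two]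
    _ ≤ |g| / 2 * N ^ 2 := by gcongr
  unfold E
  linarith

theorem tendsto_E_cocompact (hlam : 0 < lam) (g : ℝ) (ω : Fin N → Fin N → ℝ) :
    Tendsto (E N lam g ω) (cocompact (Fin N → ℝ)) atTop :=
  tendsto_atTop_mono (sum_G_sub_le_E g ω) <| tendsto_atTop_add_const_right _ _ <|
    tendsto_sum_cocompact_pi (fun _ => G_nonneg hlam) fun _ => tendsto_G_cocompact hlam

theorem continuous_E (lam g : ℝ) (ω : Fin N → Fin N → ℝ) : Continuous (E N lam g ω) := by
  have := continuous_F lam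
  have := continuous_G lam
  unfold E
  fun_prop

theorem hasDerivAt_E_update (hlam : lam ≠ 0) (g : ℝ) {ω : Fin N → Fin N → ℝ}
    (hsym : ∀ i j, ω i j = ω j i) (x : Fin N → ℝ) (i : Fin N) :
    HasDerivAt (fun s => E N lam g ω (update x i s))
      (-(F' lam (x i) * u N lam g ω x i)) (x i) := by
  have hG := hasDerivAt_sum_apply_update x i (hasDerivAt_G hlam (x i))
  have hQ := (hasDerivAt_quadratic_update (A := fun i j => F lam (ω i j))
    (fun i j => by rw [hsym]) (F lam ∘ x) i).comp (x i) (hasDerivAt_F lam (x i))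
  refine ((hG.fun_sub (hQ.const_mul (g / 2))).congr_deriv ?_).congr_of_eventuallyEq ?_
  · simp only [u, Function.comp_apply]
    ring
  · refine Eventually.of_forall fun s => ?_
    simp only [E, Function.comp_apply, ← comp_update]

end Energy

theorem hopfield_energy_coercive_and_equilibrium_exists_general (N : ℕ) (lam g : ℝ)
    (hlam : 0 < lam) (ω : Fin N → Fin N → ℝ)
    (hsym : ∀ i j, ω i j = ω j i) :
    Tendsto (E N lam g ω) (cocompact (Fin N → ℝ)) atTop ∧
    (∃ x₀ : Fin N → ℝ, ∀ x, E N lam g ω x₀ ≤ E N lam g ω x) ∧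
    (∃ xs : Fin N → ℝ, ∀ i, u N lam g ω xs i = 0) := by
  have hcoercive := tendsto_E_cocompact hlam g ω
  obtain ⟨x₀, hx₀⟩ := (continuous_E lam g ω).exists_forall_le hcoercive
  refine ⟨hcoercive, ⟨x₀, hx₀⟩, x₀, fun i => ?_⟩
  have hmin : IsLocalMin (fun s => E N lam g ω (update x₀ i s)) (x₀ i) :=
    .of_forall fun s => by simpa only [update_eq_self] using hx₀ (update x₀ i s)
  have hcrit := hmin.hasDerivAt_eq_zero (hasDerivAt_E_update hlam.ne' g hsym x₀ i)
  simpa [(F'_pos hlam (x₀ i)).ne'] using hcrit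

/-- For symmetric ω, the energy E is coercive and attains a global
minimum; consequently the network has at least one equilibrium point. -/
theorem hopfield_energy_coercive_and_equilibrium_exists (N : ℕ) (hN : 1 ≤ N) (lam g : ℝ)
    (hlam : 0 < lam) (hg : 0 < g) (ω : Fin N → Fin N → ℝ)
    (hsym : ∀ i j, ω i j = ω j i) :
    Tendsto (E N lam g ω) (cocompact (Fin N → ℝ)) atTop ∧
    (∃ x₀ : Fin N → ℝ, ∀ x, E N lam g ω x₀ ≤ E N lam g ω x) ∧
    (∃ xs : Fin N → ℝ, ∀ i, u N lam g ω xs i = 0) :=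
  hopfield_energy_coercive_and_equilibrium_exists_general N lam g hlam ω hsym
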